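/- Let 1 ≤ N < M, let κ₁ < ⋯ < κ_M be nonzero real numbers, and let A be a real N×M matrix of rank N. For j ∈ {1,…,M} define φ_j(x) = exp(θ_j(x)) · [Σ_J Δ_J(A) · ∏_{k=1}^{N}(1 − κ_{j_k}/κ_j) · E_J(x)] / τ(x) and ψ_j(x) = exp(−θ_j(x)) · (κ_j^N / τ(x)) · Σ_{J ∋ j} Δ_J(A) · E_J(x) / ∏_{k ∈ J∖{j}} (κ_j − κ_k), where the first sum runs over all N-element index sets J ⊆ {1,…,M} and the second over those containing j. Then for all x, x′ ∈ ℝ³ with τ(x) ≠ 0 and τ(x′) ≠ 0, the orthogonality relation Σ_{j=1}^{M} φ_j(x) ψ_j(x′) = 0 holds. -/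

import Mathlib

/-!
After clearing the denominators `τ(x)` and `τ(x′)`, both eigenfunctions become sums of Plücker
coordinates weighted by `E_J`. In `κ_j^N φ_j`, the factor `∏_{k ∈ J} (κ_j - κ_k)` merges `j`
into the Vandermonde product of `J ∪ {j}`; in `ψ_j`, dividing by `∏_{k ∈ J∖{j}} (κ_j - κ_k)`
removes `j` from the Vandermonde product of `J`. Hence `Σ_j φ_j(x) ψ_j(x′)` is a combination of
products `E_W(x) E_U(x′)` with `#W = N + 1`, `#U = N - 1`, whose coefficients
`Σ_{j ∈ W} ± Δ_{W∖{j}}(A) det(A_j | A_U)` vanish by the Plücker relations: expanding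
`det(A_j | A_U)` along its first column leaves Laplace expansions of determinants with a
repeated row.
-/

open Finset

noncomputable section

/-- `θ_j(x) = κ_j x₁ + κ_j² x₂ + κ_j³ x₃`. -/
def theta {M : ℕ} (κ : Fin M → ℝ) (j : Fin M) (x : Fin 3 → ℝ) : ℝ :=
  κ j * x 0 + κ j ^ 2 * x 1 + κ j ^ 3 * x 2

/-- The increasing enumeration of a `k`-element index set `s ⊆ {1,…,M}`. -/
def cols {M : ℕ} (k : ℕ) (s : Finset (Fin M)) (h : s.card = k) : Fin k → Fin M :=
  fun i => (s.orderIsoOfFin h i : Fin M)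

/-- The Plücker coordinate `Δ_J(A)`. -/
def minor {N M : ℕ} (A : Matrix (Fin N) (Fin M) ℝ) (s : Finset (Fin M))
    (h : s.card = N) : ℝ :=
  (A.submatrix id (cols N s h)).det

/-- `E_J(x) = ∏_{l<m} (κ_{j_m} − κ_{j_l}) · exp(θ_{j₁}(x) + ⋯ + θ_{j_N}(x))`. -/
def EJ {M : ℕ} (N : ℕ) (κ : Fin M → ℝ) (s : Finset (Fin M)) (h : s.card = N)
    (x : Fin 3 → ℝ) : ℝ :=
  (∏ p ∈ Finset.univ.filter (fun p : Fin N × Fin N => p.1 < p.2),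
      (κ (cols N s h p.2) - κ (cols N s h p.1))) *
    Real.exp (∑ j ∈ s, theta κ j x)

/-- The tau function `τ(x) = Σ_J Δ_J(A) E_J(x)`. -/
def tau {N M : ℕ} (κ : Fin M → ℝ) (A : Matrix (Fin N) (Fin M) ℝ) (x : Fin 3 → ℝ) : ℝ :=
  ∑ s : {s : Finset (Fin M) // s.card = N}, minor A s.1 s.2 * EJ N κ s.1 s.2 x

/-- Value of the Sato eigenfunction at `κ_j`:
`φ_j(x) = e^{θ_j(x)} [Σ_J Δ_J(A) ∏_{k=1}^N (1 − κ_{j_k}/κ_j) E_J(x)] / τ(x)`. -/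
def phi {N M : ℕ} (κ : Fin M → ℝ) (A : Matrix (Fin N) (Fin M) ℝ) (j : Fin M)
    (x : Fin 3 → ℝ) : ℝ :=
  Real.exp (theta κ j x) *
    (∑ s : {s : Finset (Fin M) // s.card = N},
      minor A s.1 s.2 * (∏ k : Fin N, (1 - κ (cols N s.1 s.2 k) / κ j)) * EJ N κ s.1 s.2 x) /
    tau κ A x

/-- Residue of the Sato adjoint eigenfunction at `κ_j`:
`ψ_j(x) = e^{−θ_j(x)} (κ_j^N/τ(x)) Σ_{J ∋ j} Δ_J(A) E_J(x) / ∏_{k∈J∖{j}} (κ_j − κ_k)`. -/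
def psi {N M : ℕ} (κ : Fin M → ℝ) (A : Matrix (Fin N) (Fin M) ℝ) (j : Fin M)
    (x : Fin 3 → ℝ) : ℝ :=
  Real.exp (-(theta κ j x)) * (κ j ^ N / tau κ A x) *
    ∑ s : {s : Finset (Fin M) // s.card = N ∧ j ∈ s},
      minor A s.1 s.2.1 * EJ N κ s.1 s.2.1 x / ∏ k ∈ s.1.erase j, (κ j - κ k)

theorem neg_one_pow_mul_neg_one_pow {R : Type*} [Monoid R] [HasDistribNeg R] (n : ℕ) :
    (-1 : R) ^ n * (-1) ^ n = 1 := by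
  rw [← pow_add, ← two_mul, pow_mul, neg_one_sq, one_pow]

namespace Finset

theorem sum_powersetCard_succ_filter_mem {ι M : Type*} [Fintype ι] [DecidableEq ι]
    [AddCommMonoid M] (n : ℕ) (j : ι) (f : Finset ι → M) :
    ∑ W ∈ powersetCard (n + 1) univ with j ∈ W, f W =
      ∑ s ∈ powersetCard n univ with j ∉ s, f (insert j s) := by
  refine (sum_nbij' (insert j) (·.erase j) ?_ ?_ ?_ ?_ fun _ _ => rfl).symm
  · intro s hs
    simp only [mem_filter, mem_powersetCard_univ] at hs ⊢
    exact ⟨by rw [card_insert_of_notMem hs.2, hs.1], mem_insert_self j s⟩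
  · intro W hW
    simp only [mem_filter, mem_powersetCard_univ] at hW ⊢
    exact ⟨by rw [card_erase_of_mem hW.2, hW.1, Nat.add_sub_cancel], notMem_erase j W⟩
  · intro s hs
    exact erase_insert (mem_filter.1 hs).2
  · intro W hW
    exact insert_erase (mem_filter.1 hW).2

variable {ι : Type*} [LinearOrder ι]

@[to_additive]
theorem prod_orderEmbOfFin {M : Type*} [CommMonoid M] (s : Finset ι) {k : ℕ} (h : #s = k)
    (f : ι → M) : ∏ i, f (s.orderEmbOfFin h i) = ∏ a ∈ s, f a := by
  rw [← prod_coe_sort s f]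
  exact Fintype.prod_equiv (s.orderIsoOfFin h).toEquiv _ _ fun _ => rfl

theorem card_filter_lt_orderEmbOfFin (s : Finset ι) {k : ℕ} (h : #s = k) (q : Fin k) :
    #{a ∈ s | a < s.orderEmbOfFin h q} = q := by
  have himage :
      {a ∈ s | a < s.orderEmbOfFin h q} = (Iio q).map (s.orderEmbOfFin h).toEmbedding := by
    ext a
    simp only [mem_filter, mem_map, mem_Iio, RelEmbedding.coe_toEmbedding]
    constructor
    · rintro ⟨ha, hlt⟩
      obtain ⟨r, rfl⟩ : a ∈ Set.range (s.orderEmbOfFin h) := by rwa [range_orderEmbOfFin]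
      exact ⟨r, (s.orderEmbOfFin h).lt_iff_lt.1 hlt, rfl⟩
    · rintro ⟨r, hr, rfl⟩
      exact ⟨s.orderEmbOfFin_mem h r, (s.orderEmbOfFin h).lt_iff_lt.2 hr⟩
  rw [himage, card_map, Fin.card_Iio]

theorem orderEmbOfFin_erase (s : Finset ι) {k : ℕ} (h : #s = k + 1) (q : Fin (k + 1))
    (h' : #(s.erase (s.orderEmbOfFin h q)) = k) :
    ⇑((s.erase (s.orderEmbOfFin h q)).orderEmbOfFin h') = q.removeNth (s.orderEmbOfFin h) :=
  (orderEmbOfFin_unique h'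
    (fun r => mem_erase.2 ⟨(s.orderEmbOfFin h).injective.ne (q.succAbove_ne r),
      s.orderEmbOfFin_mem h _⟩)
    ((s.orderEmbOfFin h).strictMono.comp (Fin.strictMono_succAbove q))).symm

end Finset

section Vandermonde

variable {ι R : Type*} [LinearOrder ι] [CommRing R]

def setVandermonde (κ : ι → R) (s : Finset ι) : R :=
  ∏ a ∈ s, ∏ b ∈ s with a < b, (κ b - κ a)

theorem setVandermonde_insert (κ : ι → R) {s : Finset ι} {j : ι} (hj : j ∉ s) :
    setVandermonde κ (insert j s) =
      (-1) ^ #{a ∈ s | a < j} * (∏ a ∈ s, (κ a - κ j)) * setVandermonde κ s := by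
  have hnew : ∏ a ∈ s, ∏ b ∈ insert j s with a < b, (κ b - κ a) =
      (∏ a ∈ s with a < j, (κ j - κ a)) * setVandermonde κ s := by
    rw [setVandermonde, prod_filter, ← prod_mul_distrib]
    refine prod_congr rfl fun a _ => ?_
    split_ifs with haj
    · rw [filter_insert, if_pos haj, prod_insert (by simp [hj])]
    · rw [filter_insert, if_neg haj, one_mul]
  have hsplit : ∏ a ∈ s, (κ a - κ j) =
      (-1) ^ #{a ∈ s | a < j} * (∏ a ∈ s with a < j, (κ j - κ a)) *
        ∏ b ∈ s with j < b, (κ b - κ j) := by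
    rw [← prod_filter_mul_prod_filter_not s (· < j), ← prod_neg]
    congr 1
    · exact prod_congr rfl fun a _ => by ring
    · refine prod_congr (filter_congr fun b hb => ?_) fun _ _ => rfl
      exact not_lt.trans (ne_of_mem_of_not_mem hb hj).symm.le_iff_lt
  rw [setVandermonde, prod_insert hj, filter_insert, if_neg (lt_irrefl j), hnew, hsplit]
  linear_combination (-(∏ b ∈ s with j < b, (κ b - κ j)) *
    (∏ a ∈ s with a < j, (κ j - κ a)) * setVandermonde κ s) *
      neg_one_pow_mul_neg_one_pow (R := R) #{a ∈ s | a < j}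

theorem setVandermonde_eq_prod_orderEmbOfFin (κ : ι → R) (s : Finset ι) {k : ℕ}
    (h : #s = k) :
    setVandermonde κ s = ∏ p : Fin k × Fin k with p.1 < p.2,
      (κ (s.orderEmbOfFin h p.2) - κ (s.orderEmbOfFin h p.1)) := by
  simp_rw [prod_filter, Fintype.prod_prod_type, ← (s.orderEmbOfFin h).lt_iff_lt]
  rw [setVandermonde, ← prod_orderEmbOfFin s h]
  simp_rw [prod_filter, ← prod_orderEmbOfFin s h]

end Vandermonde

namespace Matrix

variable {R ι : Type*} [CommRing R] {m : ℕ}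

theorem det_submatrix_cons_removeNth (A : Matrix (Fin (m + 1)) ι R) (g : Fin (m + 1) → ι)
    (q : Fin (m + 1)) :
    (A.submatrix id (Fin.cons (g q) (q.removeNth g))).det =
      (-1) ^ (q : ℕ) * (A.submatrix id g).det := by
  rw [Fin.cons_removeNth_eq_comp_cycleRange_symm]
  change ((A.submatrix id g).submatrix id q.cycleRange.symm).det = _
  rw [det_permute', Equiv.Perm.sign_symm, Fin.sign_cycleRange]
  push_cast
  rfl

theorem sum_neg_one_pow_mul_det_submatrix_removeNth (A : Matrix (Fin (m + 1)) ι R)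
    (g : Fin (m + 2) → ι) (i : Fin (m + 1)) :
    ∑ q : Fin (m + 2), (-1) ^ (q : ℕ) * A i (g q) * (A.submatrix id (q.removeNth g)).det =
      0 := by
  -- Laplace expansion along the first row of a matrix whose rows `0` and `i + 1` are both `A i`
  have hzero : (A.submatrix (Fin.cons i id : Fin (m + 2) → Fin (m + 1)) g).det = 0 :=
    det_zero_of_row_eq (Fin.succ_ne_zero i).symm (by ext; simp)
  rw [det_succ_row_zero] at hzero
  exact hzero

theorem plucker_relation (A : Matrix (Fin (m + 1)) ι R) (u : Fin m → ι)
    (g : Fin (m + 2) → ι) :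
    ∑ q : Fin (m + 2), (-1) ^ (q : ℕ) * (A.submatrix id (Fin.cons (g q) u)).det *
      (A.submatrix id (q.removeNth g)).det = 0 := by
  have hexpand (c : ι) : (A.submatrix id (Fin.cons c u)).det =
      ∑ i : Fin (m + 1), (-1) ^ (i : ℕ) * A i c * (A.submatrix i.succAbove u).det := by
    rw [det_succ_column_zero]
    simp [Function.comp_def]
  simp_rw [hexpand, mul_sum, sum_mul]
  rw [sum_comm]
  refine sum_eq_zero fun i _ => ?_
  rw [← mul_zero ((-1) ^ (i : ℕ) * (A.submatrix i.succAbove u).det),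
    ← sum_neg_one_pow_mul_det_submatrix_removeNth A g i, mul_sum]
  exact sum_congr rfl fun q _ => by ring

end Matrix

section PluckerCoordinates

variable {R ι : Type*} [CommRing R] [LinearOrder ι] {n : ℕ}

def pluckerCoord (A : Matrix (Fin n) ι R) (s : Finset ι) : R :=
  if h : #s = n then (A.submatrix id (s.orderEmbOfFin h)).det else 0

def detCons (A : Matrix (Fin (n + 1)) ι R) (U : Finset ι) (j : ι) : R :=
  if h : #U = n then (A.submatrix id (Fin.cons j (U.orderEmbOfFin h))).det else 0

theorem detCons_of_mem (A : Matrix (Fin (n + 1)) ι R) {U : Finset ι} {j : ι} (hj : j ∈ U) :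
    detCons A U j = 0 := by
  rw [detCons]
  split_ifs with h
  · obtain ⟨r, rfl⟩ : j ∈ Set.range (U.orderEmbOfFin h) := by rwa [range_orderEmbOfFin]
    exact Matrix.det_zero_of_column_eq (Fin.succ_ne_zero r).symm fun _ => rfl
  · rfl

theorem pluckerCoord_erase_orderEmbOfFin (A : Matrix (Fin (n + 1)) ι R) (s : Finset ι)
    (h : #s = n + 2) (q : Fin (n + 2)) :
    pluckerCoord A (s.erase (s.orderEmbOfFin h q)) =
      (A.submatrix id (q.removeNth (s.orderEmbOfFin h))).det := by
  have h' : #(s.erase (s.orderEmbOfFin h q)) = n + 1 := by simp [card_erase_of_mem, h]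
  rw [pluckerCoord, dif_pos h', orderEmbOfFin_erase]

theorem detCons_erase_orderEmbOfFin (A : Matrix (Fin (n + 1)) ι R) (s : Finset ι)
    (h : #s = n + 1) (q : Fin (n + 1)) :
    detCons A (s.erase (s.orderEmbOfFin h q)) (s.orderEmbOfFin h q) =
      (-1) ^ (q : ℕ) * pluckerCoord A s := by
  have h' : #(s.erase (s.orderEmbOfFin h q)) = n := by simp [card_erase_of_mem, h]
  rw [detCons, dif_pos h', orderEmbOfFin_erase, Matrix.det_submatrix_cons_removeNth,
    pluckerCoord, dif_pos h]

theorem pluckerCoord_insert (A : Matrix (Fin (n + 1)) ι R) {U : Finset ι} {j : ι}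
    (hj : j ∉ U) :
    pluckerCoord A (insert j U) = (-1) ^ #{k ∈ U | k < j} * detCons A U j := by
  by_cases hU : #U = n
  · have hW : #(insert j U) = n + 1 := by rw [card_insert_of_notMem hj, hU]
    obtain ⟨q, hq⟩ : j ∈ Set.range ((insert j U).orderEmbOfFin hW) := by
      rw [range_orderEmbOfFin]; exact mem_insert_self j U
    have hpos : #{k ∈ U | k < j} = q := by
      rw [← card_filter_lt_orderEmbOfFin _ hW q, hq, filter_insert, if_neg (lt_irrefl j)]
    have hdet := detCons_erase_orderEmbOfFin A _ hW q
    rw [hq, erase_insert hj] at hdet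
    rw [hdet, hpos, ← mul_assoc, neg_one_pow_mul_neg_one_pow, one_mul]
  · have hW : #(insert j U) ≠ n + 1 := by rw [card_insert_of_notMem hj]; omega
    rw [pluckerCoord, dif_neg hW, detCons, dif_neg hU, mul_zero]

theorem sum_pluckerCoord_erase_mul_detCons (A : Matrix (Fin (n + 1)) ι R) {W : Finset ι}
    (hW : #W = n + 2) (U : Finset ι) :
    ∑ j ∈ W, (-1) ^ #{k ∈ W | k < j} * pluckerCoord A (W.erase j) * detCons A U j = 0 := by
  by_cases hU : #U = n
  · rw [← sum_orderEmbOfFin W hW]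
    simp_rw [card_filter_lt_orderEmbOfFin, pluckerCoord_erase_orderEmbOfFin A W hW, detCons,
      dif_pos hU]
    rw [← Matrix.plucker_relation A (U.orderEmbOfFin hU) (W.orderEmbOfFin hW)]
    exact sum_congr rfl fun q _ => mul_right_comm _ _ _
  · simp [detCons, hU]

variable [Fintype ι]

def signedPluckerSum (A : Matrix (Fin n) ι R) (f : Finset ι → R) (j : ι) : R :=
  ∑ W ∈ powersetCard (n + 1) univ with j ∈ W,
    (-1) ^ #{k ∈ W | k < j} * pluckerCoord A (W.erase j) * f W

def detConsSum (A : Matrix (Fin (n + 1)) ι R) (g : Finset ι → R) (j : ι) : R :=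
  ∑ U ∈ powersetCard n univ, detCons A U j * g U

theorem sum_signedPluckerSum_mul_detConsSum (A : Matrix (Fin (n + 1)) ι R)
    (f g : Finset ι → R) :
    ∑ j, signedPluckerSum A f j * detConsSum A g j = 0 := by
  simp_rw [signedPluckerSum, detConsSum, sum_mul_sum, sum_filter]
  rw [sum_comm]
  refine sum_eq_zero fun W hW => ?_
  rw [sum_ite_mem, univ_inter, sum_comm]
  refine sum_eq_zero fun U _ => ?_
  calc _ = f W * g U * ∑ j ∈ W,
          (-1) ^ #{k ∈ W | k < j} * pluckerCoord A (W.erase j) * detCons A U j := by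
        rw [mul_sum]; exact sum_congr rfl fun _ _ => by ring
    _ = 0 := by rw [sum_pluckerCoord_erase_mul_detCons A (mem_powersetCard_univ.1 hW), mul_zero]

end PluckerCoordinates

section Sato

variable {N M : ℕ} (κ : Fin M → ℝ)

def vandermondeExp (s : Finset (Fin M)) (x : Fin 3 → ℝ) : ℝ :=
  setVandermonde κ s * Real.exp (∑ k ∈ s, theta κ k x)

theorem vandermondeExp_insert {s : Finset (Fin M)} {j : Fin M} (hj : j ∉ s) (x : Fin 3 → ℝ) :
    vandermondeExp κ (insert j s) x = (-1) ^ #{a ∈ s | a < j} * (∏ a ∈ s, (κ a - κ j)) *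
      Real.exp (theta κ j x) * vandermondeExp κ s x := by
  rw [vandermondeExp, vandermondeExp, setVandermonde_insert κ hj, sum_insert hj, Real.exp_add]
  ring

theorem cols_eq_orderEmbOfFin (k : ℕ) (s : Finset (Fin M)) (h : #s = k) :
    cols k s h = s.orderEmbOfFin h :=
  funext fun i => s.coe_orderIsoOfFin_apply h i

theorem minor_eq_pluckerCoord (A : Matrix (Fin N) (Fin M) ℝ) (s : Finset (Fin M))
    (h : #s = N) :
    minor A s h = pluckerCoord A s := by
  rw [minor, pluckerCoord, dif_pos h, cols_eq_orderEmbOfFin]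

theorem EJ_eq_vandermondeExp (s : Finset (Fin M)) (h : #s = N) (x : Fin 3 → ℝ) :
    EJ N κ s h x = vandermondeExp κ s x := by
  rw [EJ, vandermondeExp, setVandermonde_eq_prod_orderEmbOfFin κ s h, cols_eq_orderEmbOfFin]

theorem pow_mul_phi_eq_signedPluckerSum (A : Matrix (Fin N) (Fin M) ℝ) {j : Fin M}
    (hj : κ j ≠ 0) (x : Fin 3 → ℝ) :
    κ j ^ N * phi κ A j x =
      (-1) ^ N * signedPluckerSum A (vandermondeExp κ · x) j / tau κ A x := by
  have hsum : ∑ s : {s : Finset (Fin M) // #s = N},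
        minor A s.1 s.2 * (∏ k, (1 - κ (cols N s.1 s.2 k) / κ j)) * EJ N κ s.1 s.2 x =
      ∑ s ∈ powersetCard N univ,
        pluckerCoord A s * (∏ a ∈ s, (1 - κ a / κ j)) * vandermondeExp κ s x := by
    rw [sum_subtype _ fun s => mem_powersetCard_univ]
    refine sum_congr rfl fun s _ => ?_
    rw [minor_eq_pluckerCoord, EJ_eq_vandermondeExp, cols_eq_orderEmbOfFin,
      prod_orderEmbOfFin s.1 s.2 (fun a => 1 - κ a / κ j)]
  have hvanish : ∀ s ∈ powersetCard N univ,
      κ j ^ N * Real.exp (theta κ j x) *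
        (pluckerCoord A s * (∏ a ∈ s, (1 - κ a / κ j)) * vandermondeExp κ s x) ≠ 0 →
      j ∉ s :=
    fun s _ hne hjs => hne (by rw [prod_eq_zero hjs (by rw [div_self hj, sub_self])]; ring)
  rw [phi, hsum, mul_div_assoc', signedPluckerSum, sum_powersetCard_succ_filter_mem]
  congr 1
  rw [← mul_assoc, mul_sum, mul_sum, ← sum_filter_of_ne hvanish]
  refine sum_congr rfl fun s hs => ?_
  obtain ⟨hcard, hjs⟩ := mem_filter.1 hs
  rw [mem_powersetCard_univ] at hcard
  have hprod :
      κ j ^ N * ∏ a ∈ s, (1 - κ a / κ j) = (-1) ^ N * ∏ a ∈ s, (κ a - κ j) := by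
    rw [← hcard, ← prod_const, ← prod_const, ← prod_mul_distrib, ← prod_mul_distrib]
    exact prod_congr rfl fun a _ => by field_simp; ring
  rw [erase_insert hjs, filter_insert, if_neg (lt_irrefl j), vandermondeExp_insert κ hjs]
  linear_combination
    (pluckerCoord A s * Real.exp (theta κ j x) * vandermondeExp κ s x) * hprod -
      (-1) ^ N * pluckerCoord A s * Real.exp (theta κ j x) * vandermondeExp κ s x *
        (∏ a ∈ s, (κ a - κ j)) * neg_one_pow_mul_neg_one_pow (R := ℝ) #{a ∈ s | a < j}

theorem psi_eq_detConsSum {n : ℕ} (hκ : Function.Injective κ)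
    (A : Matrix (Fin (n + 1)) (Fin M) ℝ) (j : Fin M) (x : Fin 3 → ℝ) :
    psi κ A j x =
      κ j ^ (n + 1) / tau κ A x * ((-1) ^ n * detConsSum A (vandermondeExp κ · x) j) := by
  have hsum : ∑ s : {s : Finset (Fin M) // #s = n + 1 ∧ j ∈ s},
        minor A s.1 s.2.1 * EJ (n + 1) κ s.1 s.2.1 x / ∏ k ∈ s.1.erase j, (κ j - κ k) =
      ∑ T ∈ powersetCard (n + 1) univ with j ∈ T,
        pluckerCoord A T * vandermondeExp κ T x / ∏ k ∈ T.erase j, (κ j - κ k) := by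
    rw [sum_subtype _ fun T => mem_filter.trans (and_congr_left' mem_powersetCard_univ)]
    exact sum_congr rfl fun T _ => by rw [minor_eq_pluckerCoord, EJ_eq_vandermondeExp]
  have hvanish :
      ∀ U ∈ powersetCard n univ, detCons A U j * vandermondeExp κ U x ≠ 0 → j ∉ U :=
    fun U _ hne hjU => hne (by rw [detCons_of_mem A hjU, zero_mul])
  rw [psi, hsum, sum_powersetCard_succ_filter_mem, detConsSum, ← sum_filter_of_ne hvanish,
    mul_sum, mul_sum, mul_sum]
  refine sum_congr rfl fun U hU => ?_
  obtain ⟨hcard, hjU⟩ := mem_filter.1 hU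
  rw [mem_powersetCard_univ] at hcard
  have hprod : ∏ a ∈ U, (κ a - κ j) = (-1) ^ n * ∏ a ∈ U, (κ j - κ a) := by
    rw [← hcard, ← prod_neg]
    exact prod_congr rfl fun a _ => (neg_sub _ _).symm
  have hne : ∏ a ∈ U, (κ j - κ a) ≠ 0 :=
    prod_ne_zero_iff.2 fun a ha => sub_ne_zero.2 (hκ.ne (ne_of_mem_of_not_mem ha hjU).symm)
  rw [erase_insert hjU, pluckerCoord_insert A hjU, vandermondeExp_insert κ hjU, hprod,
    Real.exp_neg]
  field_simp
  rw [sq, neg_one_pow_mul_neg_one_pow, mul_one]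

end Sato

theorem orthogonality_relation_general (N M : ℕ) (hN : 1 ≤ N)
    (κ : Fin M → ℝ) (hκ : StrictMono κ) (hκ0 : ∀ j, κ j ≠ 0)
    (A : Matrix (Fin N) (Fin M) ℝ)
    (x x' : Fin 3 → ℝ) :
    ∑ j : Fin M, phi κ A j x * psi κ A j x' = 0 := by
  obtain ⟨n, rfl⟩ := Nat.exists_eq_add_of_le' hN
  have hterm (j : Fin M) : phi κ A j x * psi κ A j x' =
      (-1) ^ (n + 1) * (-1) ^ n / (tau κ A x * tau κ A x') *
        (signedPluckerSum A (vandermondeExp κ · x) j *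
          detConsSum A (vandermondeExp κ · x') j) := by
    calc phi κ A j x * psi κ A j x'
        = κ j ^ (n + 1) * phi κ A j x *
            ((-1) ^ n * detConsSum A (vandermondeExp κ · x') j) / tau κ A x' := by
          rw [psi_eq_detConsSum κ hκ.injective]; ring
      _ = _ := by rw [pow_mul_phi_eq_signedPluckerSum κ A (hκ0 j)]; ring
  rw [sum_congr rfl fun j _ => hterm j, ← mul_sum, sum_signedPluckerSum_mul_detConsSum,
    mul_zero]

/-- **orthogonality relation.** For `1 ≤ N < M`, nonzero `κ₁ < ⋯ < κ_M`
and a real `N×M` matrix `A` of rank `N`, for all `x, x′ ∈ ℝ³` with `τ(x) ≠ 0 ≠ τ(x′)`: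
`Σ_{j=1}^{M} φ_j(x) ψ_j(x′) = 0`. -/
theorem orthogonality_relation (N M : ℕ) (hN : 1 ≤ N) (hNM : N < M)
    (κ : Fin M → ℝ) (hκ : StrictMono κ) (hκ0 : ∀ j, κ j ≠ 0)
    (A : Matrix (Fin N) (Fin M) ℝ) (hrank : A.rank = N)
    (x x' : Fin 3 → ℝ) (hx : tau κ A x ≠ 0) (hx' : tau κ A x' ≠ 0) :
    ∑ j : Fin M, phi κ A j x * psi κ A j x' = 0 :=
  orthogonality_relation_general N M hN κ hκ hκ0 A x x'

end
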